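/- arXiv:2501.03852 — 3 statements merged into one kernel-verified Lean document; each statement's English description precedes it below -/
import Mathlib

section
/- Let p be a prime, X = (V, E, s, t) a finite connected directed multigraph with V nonempty, and a ∈ ℤ_p. Then the derived graphs X(ℤ/p^nℤ, α_n), where α_n is the constant voltage assignment with value a mod p^n, are connected for all n ≥ 1 if and only if a is a p-adic unit and X admits a closed walk whose weight is coprime to p. -/
/-- A directed multigraph: a vertex type `V`, an edge type `E`, and source/target maps. -/
structure DirMultigraph (V E : Type*) where
  s : E → V
  t : E → V

/-- The adjacency relation: there is an edge with source `x` and target `y`. -/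
def DirMultigraph.Adj {V E : Type*} (X : DirMultigraph V E) (x y : V) : Prop :=
  ∃ e, X.s e = x ∧ X.t e = y

/-- A directed multigraph is connected if any two vertices are related by the
reflexive-transitive-symmetric closure of the adjacency relation. -/
def DirMultigraph.Connected {V E : Type*} (X : DirMultigraph V E) : Prop :=
  ∀ x y : V, Relation.EqvGen X.Adj x y

/-- The derived graph `X(G, α)` of a voltage assignment `α : E → G`: vertices `V × G`,
edges `E × G`, where the edge `(e, σ)` goes from `(s e, σ)` to `(t e, σ + α e)`. -/
def DirMultigraph.derived {V E G : Type*} [AddCommGroup G]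
    (X : DirMultigraph V E) (α : E → G) : DirMultigraph (V × G) (E × G) where
  s := fun q => (X.s q.1, q.2)
  t := fun q => (X.t q.1, q.2 + α q.1)

/-- `WalkW X u v k` holds if there is a walk from `u` to `v` in which edges may be traversed
forwards or backwards, of weight `k` = (number of forwards steps) − (number of backwards
steps). -/
inductive DirMultigraph.WalkW {V E : Type*} (X : DirMultigraph V E) : V → V → ℤ → Prop
  | nil (v : V) : WalkW X v v 0
  | fwd {u v w : V} {k : ℤ} (e : E) (h : WalkW X u v k) (hs : X.s e = v) (ht : X.t e = w) :
      WalkW X u w (k + 1)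
  | bwd {u v w : V} {k : ℤ} (e : E) (h : WalkW X u v k) (ht : X.t e = v) (hs : X.s e = w) :
      WalkW X u w (k - 1)

/-!
A walk of weight `k` from `u` to `w` in `X` lifts to a walk in the derived graph of a constant
voltage `c` from `(u, σ)` to `(w, σ + k • c)`, and every walk of the derived graph arises this way.
If the derived graph over `ℤ/pℤ` is connected, joining `(v, 0)` to `(v, 1)` gives a closed walk of
weight `k` with `k · (a mod p) = 1`, so `p ∤ k` and `a` is a unit. Conversely, if `k · (a mod pⁿ)`
is a unit, winding `j` times around the closed walk shifts the fibre coordinate by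
`j · k · (a mod pⁿ)`, which reaches every residue.
-/

namespace DirMultigraph

variable {V E : Type*} {X : DirMultigraph V E}

namespace WalkW

theorem cast {u v : V} {k l : ℤ} (h : X.WalkW u v k) (hkl : k = l) : X.WalkW u v l :=
  hkl ▸ h

theorem append {u v w : V} {k l : ℤ} (h₁ : X.WalkW u v k) (h₂ : X.WalkW v w l) :
    X.WalkW u w (k + l) := by
  induction h₂ with
  | nil => simpa using h₁
  | fwd e _ hs ht ih => exact (fwd e ih hs ht).cast (by ring)
  | bwd e _ ht hs ih => exact (bwd e ih ht hs).cast (by ring)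

theorem reverse {u v : V} {k : ℤ} (h : X.WalkW u v k) : X.WalkW v u (-k) := by
  induction h with
  | nil => simpa using nil _
  | fwd e _ hs ht ih => exact ((bwd e (nil _) ht hs).append ih).cast (by ring)
  | bwd e _ ht hs ih => exact ((fwd e (nil _) hs ht).append ih).cast (by ring)

theorem zsmul {v : V} {k : ℤ} (h : X.WalkW v v k) (j : ℤ) : X.WalkW v v (j * k) := by
  induction j using Int.induction_on with
  | zero => simpa using nil v
  | succ i ih => exact (ih.append h).cast (by ring)
  | pred i ih => exact (ih.append h.reverse).cast (by ring)

end WalkW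

theorem exists_walkW_of_eqvGen {u w : V} (h : Relation.EqvGen X.Adj u w) :
    ∃ k : ℤ, X.WalkW u w k := by
  induction h with
  | rel x y hxy =>
    obtain ⟨e, hs, ht⟩ := hxy
    exact ⟨_, .fwd e (.nil _) hs ht⟩
  | refl x => exact ⟨_, .nil x⟩
  | symm x y _ ih =>
    obtain ⟨k, hk⟩ := ih
    exact ⟨_, hk.reverse⟩
  | trans x y z _ _ ih₁ ih₂ =>
    obtain ⟨k₁, hk₁⟩ := ih₁
    obtain ⟨k₂, hk₂⟩ := ih₂
    exact ⟨_, hk₁.append hk₂⟩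

section ConstantVoltage

variable {G : Type*} [AddCommGroup G] {c : G}

theorem exists_walkW_of_eqvGen_derived_const {x y : V × G}
    (h : Relation.EqvGen (X.derived fun _ : E => c).Adj x y) :
    ∃ k : ℤ, X.WalkW x.1 y.1 k ∧ y.2 = x.2 + k • c := by
  induction h with
  | rel x y hxy =>
    obtain ⟨⟨e, σ⟩, rfl, rfl⟩ := hxy
    exact ⟨1, (WalkW.fwd e (.nil _) rfl rfl).cast (zero_add 1), by simp [derived]⟩
  | refl x => exact ⟨0, .nil _, by simp⟩
  | symm x y _ ih =>
    obtain ⟨k, hk, hy⟩ := ih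
    exact ⟨-k, hk.reverse, by rw [hy, neg_smul]; abel⟩
  | trans x y z _ _ ih₁ ih₂ =>
    obtain ⟨k₁, hk₁, hy⟩ := ih₁
    obtain ⟨k₂, hk₂, hz⟩ := ih₂
    exact ⟨k₁ + k₂, hk₁.append hk₂, by rw [hz, hy, add_smul, add_assoc]⟩

theorem WalkW.eqvGen_derived_const {u w : V} {k : ℤ} (h : X.WalkW u w k) (σ : G) :
    Relation.EqvGen (X.derived fun _ : E => c).Adj (u, σ) (w, σ + k • c) := by
  induction h with
  | nil => simpa using Relation.EqvGen.refl _
  | @fwd _ _ k e _ hs ht ih =>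
    refine ih.trans _ _ _ (.rel _ _ ⟨(e, σ + k • c), ?_, ?_⟩)
    · simp [derived, hs]
    · simp [derived, ht, add_smul, add_assoc]
  | @bwd _ _ k e _ ht hs ih =>
    refine ih.trans _ _ _ (.symm _ _ (.rel _ _ ⟨(e, σ + (k - 1) • c), ?_, ?_⟩))
    · simp [derived, hs]
    · simp [derived, ht, sub_smul, add_assoc]

theorem Connected.exists_closed_walkW_zsmul_eq (h : (X.derived fun _ : E => c).Connected)
    (v : V) (g : G) : ∃ k : ℤ, X.WalkW v v k ∧ k • c = g := by
  obtain ⟨k, hk, hg⟩ := exists_walkW_of_eqvGen_derived_const (h (v, 0) (v, g))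
  exact ⟨k, hk, by simpa using hg.symm⟩

theorem Connected.derived_const_of_zmultiples_eq_top (hX : X.Connected) {v : V} {k : ℤ} (hk : X.WalkW v v k)
    (hgen : AddSubgroup.zmultiples (k • c) = ⊤) : (X.derived fun _ : E => c).Connected := by
  rintro ⟨u, σ⟩ ⟨w, τ⟩
  obtain ⟨m₁, hm₁⟩ := exists_walkW_of_eqvGen (hX u v)
  obtain ⟨m₂, hm₂⟩ := exists_walkW_of_eqvGen (hX v w)
  obtain ⟨j, hj⟩ := AddSubgroup.mem_zmultiples_iff.1
    ((AddSubgroup.eq_top_iff' _).1 hgen (τ - σ - (m₁ + m₂) • c))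
  have hwalk : X.WalkW u w (m₁ + (j * k + m₂)) := hm₁.append ((hk.zsmul j).append hm₂)
  convert hwalk.eqvGen_derived_const σ using 2
  rw [add_smul, add_smul, mul_smul, hj, add_smul]
  abel

end ConstantVoltage

end DirMultigraph

theorem ZMod.zmultiples_eq_top_of_isUnit {N : ℕ} {u : ZMod N} (hu : IsUnit u) :
    AddSubgroup.zmultiples u = ⊤ := by
  refine (AddSubgroup.eq_top_iff' _).2 fun g => ?_
  obtain ⟨j, hj⟩ := ZMod.intCast_surjective (g * ↑hu.unit⁻¹ : ZMod N)
  exact ⟨j, show j • u = g by rw [zsmul_eq_mul, hj, mul_assoc, hu.val_inv_mul, mul_one]⟩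

theorem ZMod.isUnit_intCast_iff_not_dvd_pow {p n : ℕ} (hp : p.Prime) (hn : 0 < n) (k : ℤ) :
    IsUnit (k : ZMod (p ^ n)) ↔ ¬ (p : ℤ) ∣ k := by
  obtain ⟨m, rfl | rfl⟩ := k.eq_nat_or_neg <;>
    simp [ZMod.isUnit_natCast_iff_not_dvd_pow hp hn, Int.natCast_dvd_natCast]

theorem PadicInt.isUnit_toZModPow_iff {p : ℕ} [Fact p.Prime] {n : ℕ} (hn : 0 < n) (a : ℤ_[p]) :
    IsUnit (toZModPow n a) ↔ IsUnit a := by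
  refine ⟨fun h => ?_, fun h => h.map _⟩
  by_contra ha
  obtain ⟨b, rfl⟩ := (norm_lt_one_iff_dvd a).1 (a.norm_le_one.lt_of_ne (mt isUnit_iff.2 ha))
  rw [map_mul, map_natCast] at h
  exact ZMod.prime_natCast_not_isUnit_pow Fact.out hn (isUnit_of_mul_isUnit_left h)

theorem derived_connected_iff_isUnit_and_exists_closed_walk_general {p : ℕ} [Fact p.Prime] {V E : Type*}
    [Nonempty V] (X : DirMultigraph V E) (hX : X.Connected)
    (a : ℤ_[p]) :
    (∀ n : ℕ, 1 ≤ n → (X.derived (fun _ : E => PadicInt.toZModPow n a)).Connected) ↔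
      (IsUnit a ∧ ∃ (v : V) (k : ℤ), X.WalkW v v k ∧ ¬ ((p : ℤ) ∣ k)) := by
  constructor
  · intro h
    obtain ⟨v⟩ := ‹Nonempty V›
    obtain ⟨k, hk, hkc⟩ := (h 1 le_rfl).exists_closed_walkW_zsmul_eq v 1
    rw [zsmul_eq_mul] at hkc
    exact ⟨(PadicInt.isUnit_toZModPow_iff one_pos a).1 (.of_mul_eq_one_right _ hkc),
      v, k, hk, (ZMod.isUnit_intCast_iff_not_dvd_pow Fact.out one_pos k).1
        (.of_mul_eq_one _ hkc)⟩
  · rintro ⟨ha, v, k, hk, hpk⟩ n hn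
    refine hX.derived_const_of_zmultiples_eq_top hk (ZMod.zmultiples_eq_top_of_isUnit ?_)
    rw [zsmul_eq_mul]
    exact ((ZMod.isUnit_intCast_iff_not_dvd_pow Fact.out hn k).2 hpk).mul
      ((PadicInt.isUnit_toZModPow_iff hn a).2 ha)

/-- Let `X` be a finite connected directed multigraph and `a ∈ ℤ_p`. The derived graphs
`X(ℤ/pⁿℤ, αₙ)` of the constant voltage assignments `αₙ` with value `a mod pⁿ` are connected
for all `n ≥ 1` if and only if `a` is a `p`-adic unit and `X` admits a closed walk whose
weight is coprime to `p`. -/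
theorem derived_connected_iff_isUnit_and_exists_closed_walk {p : ℕ} [Fact p.Prime] {V E : Type*}
    [Fintype V] [Fintype E] [Nonempty V] (X : DirMultigraph V E) (hX : X.Connected)
    (a : ℤ_[p]) :
    (∀ n : ℕ, 1 ≤ n → (X.derived (fun _ : E => PadicInt.toZModPow n a)).Connected) ↔
      (IsUnit a ∧ ∃ (v : V) (k : ℤ), X.WalkW v v k ∧ ¬ ((p : ℤ) ∣ k)) :=
  derived_connected_iff_isUnit_and_exists_closed_walk_general X hX a
end

section
/- Let p be a prime, X = (V, E, s, t) a finite connected directed multigraph, and m ≥ 1. Suppose that the weight of every closed walk of X is divisible by p^m. Then in the derived graph X(ℤ/p^mℤ, α), where α is the constant voltage assignment with value 1, any two vertices (v, σ) and (v, τ) lying in the same connected component satisfy σ = τ; consequently the projection map V × ℤ/p^mℤ → V, (v, σ) ↦ v, is injective on each connected component of X(ℤ/p^mℤ, α). -/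
/-!
A path in the derived graph `X(G, c)` of a constant voltage `c` projects to a walk in `X`, and
along it the `G`-coordinate changes by `k • c`, where `k` is the weight of the projected walk.
A path from `(v, σ)` to `(v, τ)` therefore projects to a closed walk of some weight `k` with
`τ = σ + k` in `ℤ/nℤ`, and `n ∣ k` forces `σ = τ`.
-/

namespace DirMultigraph

variable {V E : Type*} {X : DirMultigraph V E}

theorem WalkW.append_s8 {u v w : V} {k l : ℤ} (h₁ : X.WalkW u v k) (h₂ : X.WalkW v w l) :
    X.WalkW u w (k + l) := by
  induction h₂ with
  | nil => simpa using h₁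
  | fwd e _ hs ht ih => simpa only [add_assoc] using ih.fwd e hs ht
  | bwd e _ ht hs ih => simpa only [add_sub_assoc] using ih.bwd e ht hs

theorem WalkW.of_adj {u v : V} (h : X.Adj u v) : X.WalkW u v 1 := by
  obtain ⟨e, hs, ht⟩ := h
  simpa using (WalkW.nil u).fwd e hs ht

theorem WalkW.of_adj_symm {u v : V} (h : X.Adj u v) : X.WalkW v u (-1) := by
  obtain ⟨e, hs, ht⟩ := h
  simpa using (WalkW.nil v).bwd e ht hs

theorem WalkW.symm {u v : V} {k : ℤ} (h : X.WalkW u v k) : X.WalkW v u (-k) := by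
  induction h with
  | nil => exact WalkW.nil _
  | fwd e _ hs ht ih =>
    simpa [neg_add, add_comm] using (WalkW.of_adj_symm ⟨e, hs, ht⟩).append_s8 ih
  | bwd e _ ht hs ih =>
    simpa [neg_sub, sub_eq_neg_add, add_comm] using (WalkW.of_adj ⟨e, hs, ht⟩).append_s8 ih

theorem exists_walkW_of_eqvGen_derived_const_s8 {G : Type*} [AddCommGroup G] (c : G)
    {a b : V × G} (h : Relation.EqvGen (X.derived fun _ => c).Adj a b) :
    ∃ k : ℤ, X.WalkW a.1 b.1 k ∧ b.2 = a.2 + k • c := by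
  induction h with
  | rel x y hxy =>
    obtain ⟨⟨e, σ⟩, hs, ht⟩ := hxy
    subst hs ht
    exact ⟨1, WalkW.of_adj ⟨e, rfl, rfl⟩, by simp [derived]⟩
  | refl x => exact ⟨0, WalkW.nil _, by simp⟩
  | symm x y _ ih =>
    obtain ⟨k, hw, hk⟩ := ih
    exact ⟨-k, hw.symm, by rw [hk, neg_zsmul]; abel⟩
  | trans x y z _ _ ih₁ ih₂ =>
    obtain ⟨k, hw, hk⟩ := ih₁
    obtain ⟨l, hw', hl⟩ := ih₂
    exact ⟨k + l, hw.append_s8 hw', by rw [hl, hk, add_zsmul, add_assoc]⟩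

theorem eq_of_eqvGen_derived_one_zmod {n : ℕ}
    (hdiv : ∀ (v : V) (k : ℤ), X.WalkW v v k → (n : ℤ) ∣ k) {v : V} {σ τ : ZMod n}
    (h : Relation.EqvGen (X.derived fun _ => (1 : ZMod n)).Adj (v, σ) (v, τ)) : σ = τ := by
  obtain ⟨k, hw, hk⟩ := exists_walkW_of_eqvGen_derived_const_s8 1 h
  have hk0 : (k : ZMod n) = 0 := (ZMod.intCast_zmod_eq_zero_iff_dvd k n).mpr (hdiv v k hw)
  simpa [hk0] using hk.symm

end DirMultigraph

theorem derived_component_section_general {p : ℕ} {V E : Type*}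
    (X : DirMultigraph V E)
    (m : ℕ)
    (hdiv : ∀ (v : V) (k : ℤ), X.WalkW v v k → ((p : ℤ) ^ m ∣ k)) :
    (∀ (v : V) (σ τ : ZMod (p ^ m)),
      Relation.EqvGen (X.derived (fun _ : E => (1 : ZMod (p ^ m)))).Adj (v, σ) (v, τ) →
        σ = τ) ∧
    (∀ a b : V × ZMod (p ^ m),
      Relation.EqvGen (X.derived (fun _ : E => (1 : ZMod (p ^ m)))).Adj a b →
        a.1 = b.1 → a = b) := by
  have hdiv' : ∀ (v : V) (k : ℤ), X.WalkW v v k → ((p ^ m : ℕ) : ℤ) ∣ k := by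
    simpa only [Nat.cast_pow] using hdiv
  have fiber (v : V) (σ τ : ZMod (p ^ m))
      (h : Relation.EqvGen (X.derived fun _ => (1 : ZMod (p ^ m))).Adj (v, σ) (v, τ)) :
      σ = τ :=
    X.eq_of_eqvGen_derived_one_zmod hdiv' h
  refine ⟨fiber, ?_⟩
  rintro ⟨v, σ⟩ ⟨w, τ⟩ h (rfl : v = w)
  rw [fiber v σ τ h]

/-- Let `X` be a finite connected directed multigraph such that the weight of every closed
walk of `X` is divisible by `p^m`. Then in the derived graph `X(ℤ/pᵐℤ, α)` of the constant
voltage assignment with value `1`, two vertices `(v, σ)` and `(v, τ)` in the same connected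
component satisfy `σ = τ`; consequently the projection `(v, σ) ↦ v` is injective on each
connected component. -/
theorem derived_component_section {p : ℕ} [Fact p.Prime] {V E : Type*}
    [Fintype V] [Fintype E] [Nonempty V] (X : DirMultigraph V E) (hX : X.Connected)
    (m : ℕ) (hm : 1 ≤ m)
    (hdiv : ∀ (v : V) (k : ℤ), X.WalkW v v k → ((p : ℤ) ^ m ∣ k)) :
    (∀ (v : V) (σ τ : ZMod (p ^ m)),
      Relation.EqvGen (X.derived (fun _ : E => (1 : ZMod (p ^ m)))).Adj (v, σ) (v, τ) →
        σ = τ) ∧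
    (∀ a b : V × ZMod (p ^ m),
      Relation.EqvGen (X.derived (fun _ : E => (1 : ZMod (p ^ m)))).Adj a b →
        a.1 = b.1 → a = b) :=
  derived_component_section_general X m hdiv
end

section
/- Let p be a prime, n ≥ 1, and A an n×n matrix with natural number entries that is balanced: for every index i, d_i := Σ_j A_{ij} = Σ_j A_{ji}. Let D be the diagonal matrix with D_{ii} = 2·d_i, let k = Σ_i d_i, let L = D − A − Aᵀ be the Laplacian matrix, and let κ be the determinant of the matrix obtained from L by deleting its first row and first column (with κ = 1 when n = 1). Let M(T) = det(D − (1+T)·A − (1+T)^{−1}·Aᵀ) ∈ ℤ_p[[T]]. Then the coefficients of T⁰ and T¹ of M(T) are zero, and the coefficient of T² of M(T) equals −k·κ. In particular T² divides M(T) in ℤ_p[[T]]. -/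
open PowerSeries

/-- The power series `M(T) = det(D − (1+T)·A − (1+T)⁻¹·Aᵀ)` attached to a directed multigraph
with adjacency matrix `A`, where `D` is the diagonal matrix of total degrees and `S` denotes
the inverse of `1 + T` in `ℤ_p[[T]]`. -/
noncomputable def Mser (p : ℕ) [Fact p.Prime] {n : ℕ} (A : Matrix (Fin n) (Fin n) ℕ)
    (S : PowerSeries ℤ_[p]) : PowerSeries ℤ_[p] :=
  (Matrix.of fun i j =>
      Matrix.diagonal (fun i => (((∑ j, A i j) + (∑ j, A j i) : ℕ) : PowerSeries ℤ_[p])) i j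
        - (1 + PowerSeries.X) * ((A i j : ℕ) : PowerSeries ℤ_[p])
        - S * ((A j i : ℕ) : PowerSeries ℤ_[p])).det

/-- The Laplacian matrix `L = D − A − Aᵀ` over `ℤ` of a balanced directed multigraph,
where `D` is the diagonal matrix with entries `2·d_i = ∑_j A_{ij} + ∑_j A_{ji}`. -/
def Laplacian' {n : ℕ} (A : Matrix (Fin n) (Fin n) ℕ) : Matrix (Fin n) (Fin n) ℤ :=
  Matrix.of fun i j =>
    Matrix.diagonal (fun i => (2 * (∑ j, A i j) : ℤ)) i j - (A i j : ℤ) - (A j i : ℤ)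

/-!
Balance makes every row of the matrix of `M(T)` sum to `d_i (2 - (1 + T) - (1 + T)⁻¹) =
-T² (1 + T)⁻¹ d_i`. Replacing column `0` by the sum of all columns therefore gives
`M(T) = -T² (1 + T)⁻¹ C(T)`, where `C(T)` is the determinant with column `0` replaced by the
out-degrees. At `T = 0` that matrix is the Laplacian with column `0` replaced by the out-degrees;
since the columns of the Laplacian sum to zero, adding all rows to row `0` turns it into
`(k, 0, …, 0)`, so `C(0) = k κ`.
-/

namespace Matrix

variable {R : Type*} [CommRing R]

theorem det_eq_mul_det_updateCol_of_sum_row_eq {m : Type*} [Fintype m] [DecidableEq m]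
    (M : Matrix m m R) (j : m) (c : R) (v : m → R) (h : ∀ i, ∑ k, M i k = c * v i) :
    M.det = c * (M.updateCol j v).det := by
  have hcol := det_updateCol_sum M j 1
  simp only [Pi.one_apply, one_smul, h] at hcol
  rw [← det_updateCol_smul, ← hcol]
  rfl

theorem det_eq_sum_col_zero_mul_det_submatrix_succ {n : ℕ}
    (M : Matrix (Fin (n + 1)) (Fin (n + 1)) R) (h : ∀ j ≠ 0, ∑ i, M i j = 0) :
    M.det = (∑ i, M i 0) * (M.submatrix Fin.succ Fin.succ).det := by
  have hrow := det_updateRow_sum M 0 1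
  have hsum : ∑ i, M i = fun j => ∑ i, M i j := funext fun j => Finset.sum_apply j _ _
  simp only [Pi.one_apply, one_smul, hsum] at hrow
  rw [← hrow, det_succ_row_zero, Fin.sum_univ_succ, Finset.sum_eq_zero fun j _ => by
    rw [updateRow_self, h j.succ (Fin.succ_ne_zero j), mul_zero, zero_mul]]
  rw [← Fin.succAbove_zero, submatrix_updateRow_succAbove]
  simp

end Matrix

section Laplacian

variable {R : Type*} [CommRing R] {n : ℕ} (A : Matrix (Fin n) (Fin n) ℕ)

def twistedLaplacian (u v : R) : Matrix (Fin n) (Fin n) R :=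
  Matrix.of fun i j =>
    Matrix.diagonal (fun i => (((∑ j, A i j) + (∑ j, A j i) : ℕ) : R)) i j
      - u * (A i j : R) - v * (A j i : R)

theorem Mser_eq_det_twistedLaplacian (p : ℕ) [Fact p.Prime] (S : PowerSeries ℤ_[p]) :
    Mser p A S = (twistedLaplacian A (1 + X) S).det :=
  rfl

theorem map_twistedLaplacian {R' : Type*} [CommRing R'] (f : R →+* R') (u v : R) :
    (twistedLaplacian A u v).map f = twistedLaplacian A (f u) (f v) := by
  ext i j
  simp [twistedLaplacian, Matrix.diagonal_apply, apply_ite f]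

variable {A}

theorem sum_twistedLaplacian_row (hbal : ∀ i, (∑ j, A i j) = ∑ j, A j i) {u v : R}
    (huv : v * u = 1) (i : Fin n) :
    ∑ j, twistedLaplacian A u v i j = -(v * (u - 1) ^ 2) * (∑ j, A i j : ℕ) := by
  simp only [twistedLaplacian, Matrix.of_apply, Finset.sum_sub_distrib, Matrix.diagonal_apply,
    Finset.sum_ite_eq, Finset.mem_univ, if_true, ← Finset.mul_sum, ← Nat.cast_sum, ← hbal i,
    Nat.cast_add]
  linear_combination ((∑ j, A i j : ℕ) : R) * (u - 2) * huv

theorem twistedLaplacian_one_one (hbal : ∀ i, (∑ j, A i j) = ∑ j, A j i) :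
    twistedLaplacian A (1 : R) 1 = (Laplacian' A).map (Int.cast : ℤ → R) := by
  ext i j
  simp only [twistedLaplacian, Laplacian', Matrix.map_apply, Matrix.of_apply,
    Matrix.diagonal_apply, ← hbal i]
  split_ifs <;> push_cast <;> ring

theorem sum_Laplacian'_col (hbal : ∀ i, (∑ j, A i j) = ∑ j, A j i) (j : Fin n) :
    ∑ i, Laplacian' A i j = 0 := by
  simp only [Laplacian', Matrix.of_apply, Matrix.diagonal_apply, Finset.sum_sub_distrib,
    Finset.sum_ite_eq', Finset.mem_univ, if_true, ← Nat.cast_sum, hbal j]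
  ring

end Laplacian

theorem det_Laplacian'_updateCol_zero {n : ℕ} {A : Matrix (Fin (n + 1)) (Fin (n + 1)) ℕ}
    (hbal : ∀ i, (∑ j, A i j) = ∑ j, A j i) :
    ((Laplacian' A).updateCol 0 fun i => ((∑ j, A i j : ℕ) : ℤ)).det =
      (∑ i, ∑ j, A i j : ℕ) * ((Laplacian' A).submatrix Fin.succ Fin.succ).det := by
  rw [Matrix.det_eq_sum_col_zero_mul_det_submatrix_succ, ← Fin.succAbove_zero,
    Matrix.submatrix_updateCol_succAbove]
  · simp
  · intro j hj
    simp only [Matrix.updateCol_ne hj, sum_Laplacian'_col hbal]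

/-- For a balanced directed multigraph (`∑_j A_{ij} = ∑_j A_{ji}` for every `i`),
the coefficients of `T⁰` and `T¹` of `M(T) = det(D − (1+T)A − (1+T)⁻¹Aᵀ)` vanish, and the
coefficient of `T²` equals `−k·κ`, where `k` is the total degree `∑_i d_i` and `κ` is the
determinant of the Laplacian with first row and column deleted (the number of spanning trees of
the underlying undirected multigraph, by Kirchhoff's formula). In particular `T² ∣ M(T)`. -/
theorem Mser_coeff_balanced (p : ℕ) [Fact p.Prime] (n : ℕ)
    (A : Matrix (Fin (n + 1)) (Fin (n + 1)) ℕ)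
    (hbal : ∀ i, (∑ j, A i j) = ∑ j, A j i)
    (S : PowerSeries ℤ_[p]) (hS : S * (1 + PowerSeries.X) = 1) :
    PowerSeries.coeff 0 (Mser p A S) = 0 ∧
    PowerSeries.coeff 1 (Mser p A S) = 0 ∧
    PowerSeries.coeff 2 (Mser p A S) =
      -((((∑ i, ∑ j, A i j : ℕ) : ℤ) * ((Laplacian' A).submatrix Fin.succ Fin.succ).det : ℤ)
        : ℤ_[p]) ∧
    PowerSeries.X ^ 2 ∣ Mser p A S := by
  set C := ((twistedLaplacian A (1 + X) S).updateCol 0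
    fun i => ((∑ j, A i j : ℕ) : PowerSeries ℤ_[p])).det
  have hM : Mser p A S = X ^ 2 * -(S * C) := by
    rw [Mser_eq_det_twistedLaplacian, Matrix.det_eq_mul_det_updateCol_of_sum_row_eq _ 0 _ _
      (sum_twistedLaplacian_row hbal hS)]
    ring
  have hS0 : constantCoeff S = 1 := by simpa using congrArg constantCoeff hS
  have hC0 : constantCoeff C =
      (((∑ i, ∑ j, A i j : ℕ) * ((Laplacian' A).submatrix Fin.succ Fin.succ).det : ℤ) : ℤ_[p]) := by
    rw [RingHom.map_det, RingHom.mapMatrix_apply, Matrix.map_updateCol, map_twistedLaplacian,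
      map_add, map_one, constantCoeff_X, add_zero, hS0, twistedLaplacian_one_one hbal,
      ← det_Laplacian'_updateCol_zero hbal, Int.cast_det, Matrix.map_updateCol]
    congr 1
  have hdvd : X ^ 2 ∣ Mser p A S := ⟨_, hM⟩
  refine ⟨X_pow_dvd_iff.mp hdvd 0 two_pos, X_pow_dvd_iff.mp hdvd 1 one_lt_two, ?_, hdvd⟩
  rw [hM, coeff_X_pow_mul', if_pos le_rfl, Nat.sub_self, coeff_zero_eq_constantCoeff_apply,
    map_neg, map_mul, hS0, one_mul, hC0]
end
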